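/- Let ν : ℝ^q → ℝ be a multivariate polynomial (or a convergent multivariate power series around 0), and for a subset S ⊆ {1,...,q} let ν_S(b) denote ν evaluated at the vector whose coordinates in S equal those of b and whose remaining coordinates are 0. Then for 0 ≤ s < q, the Cut-HDMR approximation ν̂_s(b) := ∑_{i=0}^{s} (-1)^{s-i} C(q-i-1, s-i) ∑_{|S|=i} ν_S(b) equals the sum of all monomials of ν that involve at most s distinct variables. -/

import Mathlib

/-!
Both sides are linear in `ν`, so it suffices to treat a single monomial `c • b^α` whose variables
form the set `T`. Its cut component at `S` is the monomial itself if `T ⊆ S` and `0` otherwise, so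
the `i`-th inner sum of the Cut-HDMR formula counts the `C(q - |T|, i - |T|)` sets of size `i`
containing `T`. The resulting alternating sum
`∑ᵢ (-1)^(s-i) C(q-i-1, s-i) C(q-|T|, i-|T|)` equals `1` if `|T| ≤ s` and `0` otherwise, by the
Chu–Vandermonde identity with a negative upper index.
-/

open Finset

/-- For a function `f : ℝ^q → ℝ` and a subset `S ⊆ {1,...,q}`, `cutComponent f S b` is `f`
evaluated at the vector whose coordinates in `S` equal those of `b` and whose remaining
coordinates are `0`. -/
noncomputable def cutComponent {q : ℕ} (f : (Fin q → ℝ) → ℝ) (S : Finset (Fin q))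
    (b : Fin q → ℝ) : ℝ :=
  f fun k => if k ∈ S then b k else 0

/-- The `s`-variate Cut-HDMR approximation (anchored at `0`) of `f : ℝ^q → ℝ`:
`f̂_s(b) = ∑_{i=0}^{s} (-1)^{s-i} C(q-i-1, s-i) ∑_{|S|=i} f_S(b)`. -/
noncomputable def cutHDMR {q : ℕ} (s : ℕ) (f : (Fin q → ℝ) → ℝ) (b : Fin q → ℝ) : ℝ :=
  ∑ i ∈ Finset.range (s + 1),
    (-1 : ℝ) ^ (s - i) * (Nat.choose (q - i - 1) (s - i)) *
      ∑ S ∈ (Finset.univ : Finset (Fin q)).powersetCard i, cutComponent f S b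

theorem Ring.choose_neg_natCast_add_one (a k : ℕ) :
    Ring.choose (-((a : ℤ) + 1)) k = (-1) ^ k * (a + k).choose k := by
  rw [Ring.choose_neg, Units.smul_def, Int.coe_negOnePow_natCast, smul_eq_mul,
    show (a : ℤ) + 1 + k - 1 = ((a + k : ℕ) : ℤ) by push_cast; ring, Ring.choose_natCast]

theorem sum_range_neg_one_pow_mul_choose_mul_choose {m n : ℕ} (h : m < n) :
    ∑ j ∈ range (m + 1), (-1 : ℤ) ^ (m - j) * (n - 1 - j).choose (m - j) * n.choose j = 1 := by
  set a := n - m - 1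
  have vandermonde := Ring.add_choose_eq (r := -((a : ℤ) + 1)) (s := (n : ℤ)) m (Commute.all _ _)
  rw [show -((a : ℤ) + 1) + n = m by omega, Ring.choose_natCast, Nat.choose_self,
    Nat.cast_one, ← Nat.sum_antidiagonal_swap, Nat.sum_antidiagonal_eq_sum_range_succ_mk]
    at vandermonde
  refine Eq.trans (sum_congr rfl fun j hj => ?_) vandermonde.symm
  rw [Prod.swap_prod_mk, Ring.choose_neg_natCast_add_one, Ring.choose_natCast,
    show a + (m - j) = n - 1 - j by grind]

theorem sum_range_cutHDMR_weight_mul_choose {R : Type*} [Ring R] {q s : ℕ} (hs : s < q)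
    (t : ℕ) :
    ∑ i ∈ range (s + 1), (-1 : R) ^ (s - i) * ((q - i - 1).choose (s - i) : R) *
      (if t ≤ i then ((q - t).choose (i - t) : R) else 0) = if t ≤ s then 1 else 0 := by
  split_ifs with hts
  · rw [show s + 1 = t + (s - t + 1) by omega, sum_range_add,
      sum_eq_zero fun i hi => by rw [if_neg (by grind), mul_zero], zero_add]
    have := congrArg (Int.cast : ℤ → R)
      (sum_range_neg_one_pow_mul_choose_mul_choose (show s - t < q - t by omega))
    push_cast at this
    refine Eq.trans (sum_congr rfl fun j _ => ?_) this
    rw [if_pos (Nat.le_add_right t j), show s - (t + j) = s - t - j by omega,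
      show q - (t + j) - 1 = q - t - 1 - j by omega, Nat.add_sub_cancel_left]
  · exact sum_eq_zero fun i hi => by rw [if_neg (by grind), mul_zero]

theorem card_filter_powersetCard_subset_eq_ite {α : Type*} [DecidableEq α] {T U : Finset α}
    (hTU : T ⊆ U) (i : ℕ) :
    #{S ∈ U.powersetCard i | T ⊆ S} = if #T ≤ i then (#U - #T).choose (i - #T) else 0 := by
  split_ifs with hTi
  · exact card_filter_powersetCard_subset T U i hTU hTi
  · exact card_eq_zero.2 <| filter_eq_empty_iff.2 fun S hS hTS =>
      hTi ((card_le_card hTS).trans_eq (mem_powersetCard.1 hS).2)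

theorem prod_ite_mem_pow {σ R : Type*} [Fintype σ] [DecidableEq σ] [CommMonoidWithZero R]
    (S : Finset σ) (b : σ → R) (α : σ →₀ ℕ) :
    ∏ k, (if k ∈ S then b k else 0) ^ α k = if α.support ⊆ S then ∏ k, b k ^ α k else 0 := by
  split_ifs with h
  · refine prod_congr rfl fun k _ => ?_
    by_cases hk : k ∈ S
    · rw [if_pos hk]
    · rw [if_neg hk, Finsupp.notMem_support_iff.1 (fun hα => hk (h hα)), pow_zero, pow_zero]
  · obtain ⟨k, hk, hkS⟩ := not_subset.1 h
    exact prod_eq_zero (mem_univ k) (by rw [if_neg hkS, zero_pow (Finsupp.mem_support_iff.1 hk)])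

section cutHDMR

variable {q s : ℕ}

theorem cutHDMR_sum {ι : Type*} (A : Finset ι) (f : ι → (Fin q → ℝ) → ℝ) (b : Fin q → ℝ) :
    cutHDMR s (fun x => ∑ a ∈ A, f a x) b = ∑ a ∈ A, cutHDMR s (f a) b := by
  simp only [cutHDMR, cutComponent, mul_sum]
  rw [sum_comm]
  refine sum_congr rfl fun i _ => ?_
  rw [sum_comm]

theorem cutComponent_monomial (α : Fin q →₀ ℕ) (c : ℝ) (S : Finset (Fin q)) (b : Fin q → ℝ) :
    cutComponent (fun x => c * ∏ k, x k ^ α k) S b =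
      if α.support ⊆ S then c * ∏ k, b k ^ α k else 0 := by
  rw [cutComponent, prod_ite_mem_pow, mul_ite, mul_zero]

theorem cutHDMR_eq_ite_of_cutComponent_eq_ite (hs : s < q) {f : (Fin q → ℝ) → ℝ}
    {b : Fin q → ℝ} {T : Finset (Fin q)} {c : ℝ}
    (hf : ∀ S, cutComponent f S b = if T ⊆ S then c else 0) :
    cutHDMR s f b = if #T ≤ s then c else 0 := by
  simp only [cutHDMR, hf, ← sum_filter, sum_const, nsmul_eq_mul,
    card_filter_powersetCard_subset_eq_ite (subset_univ T), card_univ, Fintype.card_fin,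
    ← mul_assoc, ← sum_mul]
  push_cast
  rw [sum_range_cutHDMR_weight_mul_choose hs, ite_mul, one_mul, zero_mul]

end cutHDMR

/-- **Theorem 1 of Xu and Rahman (2004).** For a multivariate polynomial `ν` on `ℝ^q` and
`0 ≤ s < q`, the Cut-HDMR approximation `ν̂_s` equals the sum of all monomials of `ν` that
involve at most `s` distinct variables. -/
theorem cutHDMR_eq_low_interaction_part (q s : ℕ) (hs : s < q)
    (ν : MvPolynomial (Fin q) ℝ) (b : Fin q → ℝ) :
    cutHDMR s (fun x => MvPolynomial.eval x ν) b =
      ∑ α ∈ ν.support.filter (fun α => α.support.card ≤ s),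
        ν.coeff α * ∏ k, b k ^ α k := by
  simp only [MvPolynomial.eval_eq', cutHDMR_sum, sum_filter]
  exact sum_congr rfl fun α _ =>
    cutHDMR_eq_ite_of_cutComponent_eq_ite hs (cutComponent_monomial α _ · b)
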